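/- arXiv:2007.10916 — 4 statements merged into one kernel-verified Lean document; each statement's English description precedes it below -/
import Mathlib

section
/- In the setting of the previous statement, suppose additionally that J ∈ ℝⁿ satisfies T_μ J = J + c where T_μ J = g_μ + P_μ J, and that P_μ θ ≤ β θ. Then for every k ≥ 1, T_μ^k J ≤ J + (‖Θ^{−1}λ‖_∞ / (1 − β)) · θ componentwise, where λ = max(T_μ J − J, 0). -/
/-!
The affine map `T v = g + P v` is monotone because `P ≥ 0`. With `M = L / (1 - β)`, the order
interval `{v | v ≤ J + M θ}` is `T`-invariant: `T J ≤ J + L θ` and `P θ ≤ β θ` give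
`T (J + M θ) ≤ J + (L + β M) θ = J + M θ`. Every iterate `T^k J` therefore stays below
`J + M θ`, where `L = max_j |λ_j / θ_j|` is the least constant with `λ ≤ L θ`.
-/

open Finset Matrix

lemma Matrix.mulVec_mono_of_nonneg {m n R : Type*} [Fintype n] [Semiring R] [PartialOrder R]
    [IsOrderedRing R] {P : Matrix m n R} (hP : ∀ i j, 0 ≤ P i j) {v w : n → R} (hvw : v ≤ w) :
    P *ᵥ v ≤ P *ᵥ w :=
  fun i => dotProduct_le_dotProduct_of_nonneg_left hvw (hP i)

lemma le_iSup_abs_div_mul {ι : Type*} [Finite ι] (x : ι → ℝ) {θ : ι → ℝ} (hθ : ∀ i, 0 < θ i)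
    (j : ι) : x j ≤ (⨆ i, |x i / θ i|) * θ j := by
  have hbdd : BddAbove (Set.range fun i => |x i / θ i|) := (Set.finite_range _).bddAbove
  have hθj := (hθ j).le
  calc x j = x j / θ j * θ j := (div_mul_cancel₀ _ (hθ j).ne').symm
    _ ≤ |x j / θ j| * θ j := by gcongr; exact le_abs_self _
    _ ≤ (⨆ i, |x i / θ i|) * θ j := by gcongr; exact le_ciSup hbdd j

section AffineIteration

variable {ι : Type*} [Fintype ι] {P : Matrix ι ι ℝ} {g θ J : ι → ℝ} {β L : ℝ}

lemma affine_le_of_le (hP : ∀ i j, 0 ≤ P i j) (hPθ : P *ᵥ θ ≤ β • θ)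
    (hJ : g + P *ᵥ J ≤ J + L • θ) {M : ℝ} (hM : 0 ≤ M) {v : ι → ℝ} (hv : v ≤ J + M • θ) :
    g + P *ᵥ v ≤ J + (L + β * M) • θ :=
  calc g + P *ᵥ v ≤ g + P *ᵥ (J + M • θ) := by gcongr; exact mulVec_mono_of_nonneg hP hv
    _ = (g + P *ᵥ J) + M • P *ᵥ θ := by rw [mulVec_add, mulVec_smul, add_assoc]
    _ ≤ (J + L • θ) + M • (β • θ) := by gcongr
    _ = J + (L + β * M) • θ := by module

lemma mapsTo_affine_Iic (hP : ∀ i j, 0 ≤ P i j) (hPθ : P *ᵥ θ ≤ β • θ) (hβ : β < 1)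
    (hL : 0 ≤ L) (hJ : g + P *ᵥ J ≤ J + L • θ) :
    Set.MapsTo (fun v => g + P *ᵥ v) (Set.Iic (J + (L / (1 - β)) • θ))
      (Set.Iic (J + (L / (1 - β)) • θ)) := by
  have hβ' : 0 < 1 - β := sub_pos.2 hβ
  have hfix : L + β * (L / (1 - β)) = L / (1 - β) := by field_simp; ring
  intro v hv
  simpa only [Set.mem_Iic, hfix] using affine_le_of_le hP hPθ hJ (div_nonneg hL hβ'.le) hv

theorem affine_iterate_le (hP : ∀ i j, 0 ≤ P i j) (hPθ : P *ᵥ θ ≤ β • θ) (hθ : 0 ≤ θ)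
    (hβ : β < 1) (hL : 0 ≤ L) (hJ : g + P *ᵥ J ≤ J + L • θ) (k : ℕ) :
    (fun v => g + P *ᵥ v)^[k] J ≤ J + (L / (1 - β)) • θ := by
  have hJmem : J ≤ J + (L / (1 - β)) • θ :=
    le_add_of_nonneg_right (smul_nonneg (div_nonneg hL (sub_pos.2 hβ).le) hθ)
  exact (mapsTo_affine_Iic hP hPθ hβ hL hJ).iterate k hJmem

end AffineIteration

theorem policy_iterates_upper_bound_general {n : ℕ}
    (Pμ : Matrix (Fin n) (Fin n) ℝ) (gμ θ : Fin n → ℝ) (β : ℝ)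
    (hβ1 : β < 1)
    (hPnn : ∀ i j, 0 ≤ Pμ i j)
    (hθ : ∀ i, 0 < θ i)
    (hcontr : ∀ i, Pμ.mulVec θ i ≤ β * θ i)
    (J lam : Fin n → ℝ)
    (hlam : ∀ i, lam i = max ((gμ + Pμ.mulVec J - J) i) 0) :
    ∀ k : ℕ, 1 ≤ k → ∀ i,
      (fun v => gμ + Pμ.mulVec v)^[k] J i
        ≤ J i + ((⨆ j, |lam j / θ j|) / (1 - β)) * θ i := by
  intro k _ i
  have hJ : gμ + Pμ *ᵥ J ≤ J + (⨆ j, |lam j / θ j|) • θ := fun j => by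
    have hstep : (gμ + Pμ *ᵥ J - J) j ≤ lam j := hlam j ▸ le_max_left _ _
    have := le_iSup_abs_div_mul lam hθ j
    simp only [Pi.add_apply, Pi.sub_apply, Pi.smul_apply, smul_eq_mul] at hstep ⊢
    linarith
  exact affine_iterate_le hPnn hcontr (fun j => (hθ j).le) hβ1
    (Real.iSup_nonneg fun _ => abs_nonneg _) hJ k i

theorem policy_iterates_upper_bound {n : ℕ}
    (Pμ : Matrix (Fin n) (Fin n) ℝ) (gμ θ : Fin n → ℝ) (β : ℝ)
    (hβ0 : 0 ≤ β) (hβ1 : β < 1)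
    (hPnn : ∀ i j, 0 ≤ Pμ i j)
    (hθ : ∀ i, 0 < θ i)
    (hcontr : ∀ i, Pμ.mulVec θ i ≤ β * θ i)
    (J c lam : Fin n → ℝ)
    (hJc : gμ + Pμ.mulVec J = J + c)
    (hlam : ∀ i, lam i = max ((gμ + Pμ.mulVec J - J) i) 0) :
    ∀ k : ℕ, 1 ≤ k → ∀ i,
      (fun v => gμ + Pμ.mulVec v)^[k] J i
        ≤ J i + ((⨆ j, |lam j / θ j|) / (1 - β)) * θ i :=
  policy_iterates_upper_bound_general Pμ gμ θ β hβ1 hPnn hθ hcontr J lam hlam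
end

section
/- With T the Bellman operator (as above) and μ a greedy policy for J (meaning T_μ J = T J), if additionally J^μ ≤ J + (‖Θ^{−1}λ‖_∞/(1−β)) θ, then J^μ ≤ T J + (β‖Θ^{−1}λ‖_∞/(1−β)) θ componentwise, where λ = max(T J − J, 0). -/
open Finset

/-- The Bellman (dynamic programming) operator with discount factor 1. -/
noncomputable def bellman {n : ℕ} {A : Type*} [Fintype A] [Nonempty A]
    (P : A → Matrix (Fin n) (Fin n) ℝ) (g : Fin n → A → ℝ) (J : Fin n → ℝ) :
    Fin n → ℝ :=
  fun i => ⨅ a : A, (g i a + ∑ j, P a i j * J j)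

/-!
Since `μ` is greedy, `T J = T_μ J`, and `J^μ = T_μ J^μ`; subtracting gives
`J^μ - T J = P_μ (J^μ - J)`. The assumed bound `J^μ - J ≤ c θ` with `c ≥ 0` is preserved by the
nonnegative matrix `P_μ`, and the weighted contraction `P_μ θ ≤ β θ` turns it into `β c θ`.
-/

namespace Matrix

variable {ι : Type*} [Fintype ι]

theorem mulVec_mono_of_nonneg_s7 {M : Matrix ι ι ℝ} (hM : ∀ i j, 0 ≤ M i j) {x y : ι → ℝ}
    (hxy : x ≤ y) : M *ᵥ x ≤ M *ᵥ y :=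
  fun i => dotProduct_le_dotProduct_of_nonneg_left hxy (hM i)

theorem mulVec_le_smul_of_le_smul {M : Matrix ι ι ℝ} (hM : ∀ i j, 0 ≤ M i j)
    {θ x : ι → ℝ} {β c : ℝ} (hMθ : M *ᵥ θ ≤ β • θ) (hc : 0 ≤ c) (hx : x ≤ c • θ) :
    M *ᵥ x ≤ (c * β) • θ :=
  calc M *ᵥ x ≤ M *ᵥ (c • θ) := mulVec_mono_of_nonneg_s7 hM hx
    _ = c • M *ᵥ θ := mulVec_smul M c θ
    _ ≤ c • β • θ := smul_le_smul_of_nonneg_left hMθ hc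
    _ = (c * β) • θ := smul_smul c β θ

theorem sub_affine_eq_mulVec_sub_of_fixed {M : Matrix ι ι ℝ} {b x y : ι → ℝ}
    (hy : b + M *ᵥ y = y) : y - (b + M *ᵥ x) = M *ᵥ (y - x) := by
  rw [mulVec_sub]
  nth_rewrite 1 [← hy]
  abel

end Matrix

theorem greedy_policy_value_bound_general {n : ℕ} {A : Type*} [Fintype A] [Nonempty A]
    (P : A → Matrix (Fin n) (Fin n) ℝ) (g : Fin n → A → ℝ)
    (θ : Fin n → ℝ) (β : ℝ)
    (hβ1 : β < 1)
    (hPnn : ∀ a i j, 0 ≤ P a i j)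
    (hcontr : ∀ a i, ∑ j, P a i j * θ j ≤ β * θ i)
    (μ : Fin n → A)   -- the policy
    (Pμ : Matrix (Fin n) (Fin n) ℝ) (gμ : Fin n → ℝ)
    (hPμ : ∀ i j, Pμ i j = P (μ i) i j)
    (J Jμ lam : Fin n → ℝ)
    (hgreedy : gμ + Pμ.mulVec J = bellman P g J)   -- μ is greedy for J
    (hfix : gμ + Pμ.mulVec Jμ = Jμ)                 -- Jμ is the fixed point of T_μ
    (hJμ : ∀ i, Jμ i ≤ J i + ((⨆ j, |lam j / θ j|) / (1 - β)) * θ i) :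
    ∀ i, Jμ i ≤ bellman P g J i + (β * (⨆ j, |lam j / θ j|) / (1 - β)) * θ i := by
  set c := (⨆ j, |lam j / θ j|) / (1 - β)
  have hc : 0 ≤ c := div_nonneg (Real.iSup_nonneg fun _ => abs_nonneg _) (sub_pos.2 hβ1).le
  have hPμnn : ∀ i j, 0 ≤ Pμ i j := fun i j => hPμ i j ▸ hPnn _ _ _
  have hPμθ : Pμ.mulVec θ ≤ β • θ := fun i => by
    simpa [Matrix.mulVec, dotProduct, hPμ] using hcontr (μ i) i
  have hgap : Jμ - J ≤ c • θ := fun i => by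
    simpa only [Pi.sub_apply, Pi.smul_apply, smul_eq_mul, sub_le_iff_le_add'] using hJμ i
  have hbound := Matrix.mulVec_le_smul_of_le_smul hPμnn hPμθ hc hgap
  rw [← Matrix.sub_affine_eq_mulVec_sub_of_fixed hfix, hgreedy] at hbound
  intro i
  have hcoef : β * (⨆ j, |lam j / θ j|) / (1 - β) = c * β := by ring
  have hi := hbound i
  simp only [Pi.sub_apply, Pi.smul_apply, smul_eq_mul] at hi
  rw [hcoef]
  linarith

theorem greedy_policy_value_bound {n : ℕ} {A : Type*} [Fintype A] [Nonempty A]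
    (P : A → Matrix (Fin n) (Fin n) ℝ) (g : Fin n → A → ℝ)
    (θ : Fin n → ℝ) (β : ℝ)
    (hβ0 : 0 ≤ β) (hβ1 : β < 1)
    (hPnn : ∀ a i j, 0 ≤ P a i j)
    (hθ : ∀ i, 0 < θ i)
    (hcontr : ∀ a i, ∑ j, P a i j * θ j ≤ β * θ i)
    (μ : Fin n → A)   -- the policy
    (Pμ : Matrix (Fin n) (Fin n) ℝ) (gμ : Fin n → ℝ)
    (hPμ : ∀ i j, Pμ i j = P (μ i) i j) (hgμ : ∀ i, gμ i = g i (μ i))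
    (J Jμ lam : Fin n → ℝ)
    (hgreedy : gμ + Pμ.mulVec J = bellman P g J)   -- μ is greedy for J
    (hfix : gμ + Pμ.mulVec Jμ = Jμ)                 -- Jμ is the fixed point of T_μ
    (huniq : ∀ J' : Fin n → ℝ, gμ + Pμ.mulVec J' = J' → J' = Jμ)
    (hlam : ∀ i, lam i = max (bellman P g J i - J i) 0)
    (hJμ : ∀ i, Jμ i ≤ J i + ((⨆ j, |lam j / θ j|) / (1 - β)) * θ i) :
    ∀ i, Jμ i ≤ bellman P g J i + (β * (⨆ j, |lam j / θ j|) / (1 - β)) * θ i :=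
  greedy_policy_value_bound_general P g θ β hβ1 hPnn hcontr μ Pμ gμ hPμ J Jμ lam hgreedy hfix hJμ
end

section
/- (Supermartingale convergence theorem with perturbation.) Let {X_t}, {Y_t}, {Z_t} be sequences of nonnegative random variables adapted to a filtration {F_t}, with E[Y_{t+1} | F_t] ≤ Y_t − X_t + Z_t for all t, and Σ_t Z_t < ∞ almost surely. Then Σ_t X_t < ∞ almost surely and Y_t converges almost surely to a nonnegative random variable Y_∞. -/
/-!
The compensated process `M t = Y t + ∑ s < t, (X s - Z s)` is a supermartingale. Stopped at the
first time the partial sums of `Z` reach a level `c`, it is bounded below by `-c`, hence bounded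
in `L¹`, so it converges almost surely by Doob's theorem. Where `∑ Z < c` the stopping never
happens, so `M` itself converges on the union of these events, which has full measure. Since
`Y ≥ 0`, the partial sums of `X` are then bounded, and `Y = M - ∑ X + ∑ Z` converges.
-/

open MeasureTheory Filter Topology Finset

namespace MeasureTheory

variable {Ω : Type*} {m0 : MeasurableSpace Ω} {μ : Measure Ω} {ℱ : Filtration ℕ m0}

protected theorem Supermartingale.stoppedProcess [IsFiniteMeasure μ] {f : ℕ → Ω → ℝ}
    {τ : Ω → ℕ∞} (hf : Supermartingale f ℱ μ) (hτ : IsStoppingTime ℱ τ) :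
    Supermartingale (stoppedProcess f τ) ℱ μ :=
  neg_neg (stoppedProcess f τ) ▸ (hf.neg.stoppedProcess hτ).neg

theorem Supermartingale.exists_ae_tendsto_of_bddBelow [IsFiniteMeasure μ] {f : ℕ → Ω → ℝ}
    (hf : Supermartingale f ℱ μ) {c : ℝ} (hc : ∀ t, ∀ᵐ ω ∂μ, c ≤ f t ω) :
    ∀ᵐ ω ∂μ, ∃ l, Tendsto (fun t => f t ω) atTop (𝓝 l) := by
  have hbdd : ∀ t,
      eLpNorm ((-f) t) 1 μ ≤ (∫ ω, f 0 ω ∂μ + 2 * |c| * μ.real Set.univ).toNNReal := by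
    intro t
    rw [Pi.neg_apply, eLpNorm_neg, eLpNorm_one_eq_lintegral_enorm,
      ← ofReal_integral_norm_eq_lintegral_enorm (hf.integrable t)]
    refine ENNReal.ofReal_le_ofReal ?_
    have hnorm : ∀ᵐ ω ∂μ, ‖f t ω‖ ≤ f t ω + 2 * |c| := by
      filter_upwards [hc t] with ω hω
      rw [Real.norm_eq_abs, abs_le]
      constructor <;> linarith [neg_abs_le c, abs_nonneg c]
    calc ∫ ω, ‖f t ω‖ ∂μ ≤ ∫ ω, (f t ω + 2 * |c|) ∂μ :=
          integral_mono_ae (hf.integrable t).norm ((hf.integrable t).add (integrable_const _)) hnorm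
      _ = ∫ ω, f t ω ∂μ + 2 * |c| * μ.real Set.univ := by
          rw [integral_add (hf.integrable t) (integrable_const _), integral_const, smul_eq_mul,
            mul_comm]
      _ ≤ ∫ ω, f 0 ω ∂μ + 2 * |c| * μ.real Set.univ := by
          have hmono := hf.setIntegral_le (Nat.zero_le t) MeasurableSet.univ
          rw [setIntegral_univ, setIntegral_univ] at hmono
          linarith
  filter_upwards [hf.neg.exists_ae_tendsto_of_bdd hbdd] with ω ⟨l, hl⟩
  exact ⟨-l, by simpa using hl.neg⟩

theorem supermartingale_add_sum_of_condExp_le [IsFiniteMeasure μ] {Y D : ℕ → Ω → ℝ}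
    (hY : StronglyAdapted ℱ Y) (hD : StronglyAdapted ℱ D) (hYint : ∀ t, Integrable (Y t) μ)
    (hDint : ∀ t, Integrable (D t) μ) (h : ∀ t, μ[Y (t + 1) | ℱ t] ≤ᵐ[μ] Y t - D t) :
    Supermartingale (fun t ω => Y t ω + ∑ s ∈ range t, D s ω) ℱ μ := by
  have hSm : ∀ t u, t ≤ u + 1 → StronglyMeasurable[ℱ u] (fun ω => ∑ s ∈ range t, D s ω) :=
    fun t u htu => Finset.stronglyMeasurable_fun_sum _ fun s hs =>
      (hD s).mono (ℱ.mono (by have := mem_range.1 hs; omega))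
  have hSint : ∀ t, Integrable (fun ω => ∑ s ∈ range t, D s ω) μ :=
    fun t => integrable_finsetSum _ fun s _ => hDint s
  refine supermartingale_nat (fun t => (hY t).add (hSm t t (by omega)))
    (fun t => (hYint t).add (hSint t)) fun t => ?_
  have hsplit : μ[fun ω => Y (t + 1) ω + ∑ s ∈ range (t + 1), D s ω | ℱ t] =ᵐ[μ]
      μ[Y (t + 1) | ℱ t] + fun ω => ∑ s ∈ range (t + 1), D s ω := by
    rw [← condExp_of_stronglyMeasurable (ℱ.le t) (hSm (t + 1) t le_rfl) (hSint (t + 1))]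
    exact condExp_add (hYint (t + 1)) (hSint (t + 1)) _
  filter_upwards [hsplit, h t] with ω hω hle
  rw [hω, Pi.add_apply, sum_range_succ]
  rw [Pi.sub_apply] at hle
  linarith

theorem exists_stoppedProcess_eq {β : Type*} (u : ℕ → Ω → β) (τ : Ω → ℕ∞) (t : ℕ) (ω : Ω) :
    ∃ k : ℕ, (k : ℕ∞) ≤ τ ω ∧ stoppedProcess u τ t ω = u k ω := by
  rcases le_or_gt (t : ℕ∞) (τ ω) with h | h
  · exact ⟨t, h, stoppedProcess_eq_of_le h⟩
  · obtain ⟨n, hn⟩ := ENat.ne_top_iff_exists.1 h.ne_top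
    refine ⟨n, hn.le, ?_⟩
    rw [stoppedProcess_eq_of_ge h.le, ← hn]
    rfl

theorem isStoppingTime_leastGE_sum_range {Z : ℕ → Ω → ℝ} (hZ : StronglyAdapted ℱ Z) (c : ℝ) :
    IsStoppingTime ℱ (leastGE (fun t ω => ∑ s ∈ range (t + 1), Z s ω) c) :=
  StronglyAdapted.isStoppingTime_leastGE c fun _ =>
    Finset.stronglyMeasurable_fun_sum _ fun s hs =>
      (hZ s).mono (ℱ.mono (Nat.lt_succ_iff.1 (mem_range.1 hs)))

theorem sum_range_le_of_le_leastGE {Z : ℕ → Ω → ℝ} {c : ℝ} (hc : 0 ≤ c) {ω : Ω} {k : ℕ}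
    (hk : (k : ℕ∞) ≤ leastGE (fun t ω => ∑ s ∈ range (t + 1), Z s ω) c ω) :
    ∑ s ∈ range k, Z s ω ≤ c := by
  cases k with
  | zero => simpa using hc
  | succ j =>
    have hj : (j : ℕ∞) < leastGE (fun t ω => ∑ s ∈ range (t + 1), Z s ω) c ω :=
      lt_of_lt_of_le (by exact_mod_cast j.lt_succ_self) hk
    have hlt := notMem_of_lt_hittingAfter hj bot_le
    rw [Set.mem_Ici, not_le] at hlt
    exact hlt.le

theorem neg_le_stoppedProcess_leastGE {M Z : ℕ → Ω → ℝ} {c : ℝ} (hc : 0 ≤ c) {ω : Ω}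
    (hM : ∀ t, -∑ s ∈ range t, Z s ω ≤ M t ω) (t : ℕ) :
    -c ≤ stoppedProcess M (leastGE (fun t ω => ∑ s ∈ range (t + 1), Z s ω) c) t ω := by
  obtain ⟨k, hk, heq⟩ := exists_stoppedProcess_eq M (leastGE _ c) t ω
  rw [heq]
  linarith [hM k, sum_range_le_of_le_leastGE hc hk]

theorem leastGE_sum_range_eq_top {Z : ℕ → Ω → ℝ} {c : ℝ} {ω : Ω} (hZ : ∀ t, 0 ≤ Z t ω)
    (hs : Summable fun t => Z t ω) (hc : ∑' t, Z t ω < c) :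
    leastGE (fun t ω => ∑ s ∈ range (t + 1), Z s ω) c ω = ⊤ := by
  rw [leastGE, hittingAfter_eq_top_iff]
  exact fun j _ => not_le.2 ((hs.sum_le_tsum _ fun i _ => hZ i).trans_lt hc)

end MeasureTheory

theorem summable_and_tendsto_of_tendsto_add_sum_sub {x y z : ℕ → ℝ} {L : ℝ} (hx : ∀ t, 0 ≤ x t)
    (hy : ∀ t, 0 ≤ y t) (hz : Summable z)
    (hL : Tendsto (fun t => y t + ∑ s ∈ range t, (x s - z s)) atTop (𝓝 L)) :
    Summable x ∧ Tendsto y atTop (𝓝 (L - ∑' s, x s + ∑' s, z s)) := by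
  obtain ⟨B, hB⟩ := hL.bddAbove_range
  obtain ⟨Bz, hBz⟩ := hz.hasSum.tendsto_sum_nat.bddAbove_range
  have hxs : Summable x := by
    refine summable_of_sum_range_le (c := B + Bz) hx fun n => ?_
    have h1 := hB ⟨n, rfl⟩
    have h2 := hBz ⟨n, rfl⟩
    simp only [sum_sub_distrib] at h1 h2
    linarith [hy n]
  refine ⟨hxs, ?_⟩
  convert (hL.sub hxs.hasSum.tendsto_sum_nat).add hz.hasSum.tendsto_sum_nat using 2 with t
  rw [sum_sub_distrib]
  ring

/-- Supermartingale convergence theorem with perturbation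
(Proposition 4.2 in Bertsekas–Tsitsiklis, Theorem A.1 in the paper). -/
theorem supermartingale_convergence_with_perturbation
    {Ω : Type*} {m0 : MeasurableSpace Ω} {μ : Measure Ω} [IsProbabilityMeasure μ]
    (ℱ : Filtration ℕ m0) (X Y Z : ℕ → Ω → ℝ)
    (hXadp : ∀ t, StronglyMeasurable[ℱ t] (X t))
    (hYadp : ∀ t, StronglyMeasurable[ℱ t] (Y t))
    (hZadp : ∀ t, StronglyMeasurable[ℱ t] (Z t))
    (hXint : ∀ t, Integrable (X t) μ)
    (hYint : ∀ t, Integrable (Y t) μ)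
    (hZint : ∀ t, Integrable (Z t) μ)
    (hXnn : ∀ t, 0 ≤ᵐ[μ] X t)
    (hYnn : ∀ t, 0 ≤ᵐ[μ] Y t)
    (hZnn : ∀ t, 0 ≤ᵐ[μ] Z t)
    (hsm : ∀ t, μ[Y (t + 1) | ℱ t] ≤ᵐ[μ] fun ω => Y t ω - X t ω + Z t ω)
    (hZsum : ∀ᵐ ω ∂μ, Summable fun t => Z t ω) :
    ∃ Ylim : Ω → ℝ, ∀ᵐ ω ∂μ,
      (Summable fun t => X t ω) ∧ 0 ≤ Ylim ω ∧
        Tendsto (fun t => Y t ω) atTop (𝓝 (Ylim ω)) := by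
  set M : ℕ → Ω → ℝ := fun t ω => Y t ω + ∑ s ∈ range t, (X s ω - Z s ω)
  have hM : Supermartingale M ℱ μ :=
    supermartingale_add_sum_of_condExp_le hYadp (fun t => (hXadp t).sub (hZadp t)) hYint
      (fun t => (hXint t).sub (hZint t))
      fun t => (hsm t).trans_eq (Eventually.of_forall fun ω => by simp only [Pi.sub_apply]; ring)
  have hnn : ∀ᵐ ω ∂μ, ∀ t, 0 ≤ X t ω ∧ 0 ≤ Y t ω ∧ 0 ≤ Z t ω := by
    filter_upwards [ae_all_iff.2 hXnn, ae_all_iff.2 hYnn, ae_all_iff.2 hZnn] with ω hX hY hZ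
    exact fun t => ⟨hX t, hY t, hZ t⟩
  have hMlow : ∀ᵐ ω ∂μ, ∀ t, -∑ s ∈ range t, Z s ω ≤ M t ω := by
    filter_upwards [hnn] with ω hω t
    have hX : 0 ≤ ∑ s ∈ range t, X s ω := sum_nonneg fun s _ => (hω s).1
    simp only [M, sum_sub_distrib]
    linarith [(hω t).2.1]
  have hconv : ∀ c : ℕ, ∀ᵐ ω ∂μ, ∃ l, Tendsto (fun t =>
      stoppedProcess M (leastGE (fun t ω => ∑ s ∈ range (t + 1), Z s ω) c) t ω) atTop (𝓝 l) :=
    fun c => (hM.stoppedProcess (isStoppingTime_leastGE_sum_range hZadp _)).exists_ae_tendsto_of_bddBelow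
      fun t => hMlow.mono fun ω hω => neg_le_stoppedProcess_leastGE c.cast_nonneg hω t
  refine ⟨fun ω => limUnder atTop fun t => Y t ω, ?_⟩
  filter_upwards [hZsum, hnn, ae_all_iff.2 hconv] with ω hZω hω hconvω
  obtain ⟨c, hc⟩ := exists_nat_gt (∑' t, Z t ω)
  obtain ⟨L, hL⟩ := hconvω c
  have hτ := leastGE_sum_range_eq_top (fun t => (hω t).2.2) hZω hc
  simp only [stoppedProcess_eq_of_le (hτ ▸ le_top), M] at hL
  obtain ⟨hXω, hYω⟩ :=
    summable_and_tendsto_of_tendsto_add_sum_sub (fun t => (hω t).1) (fun t => (hω t).2.1) hZω hL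
  rw [hYω.limUnder_eq]
  exact ⟨hXω, ge_of_tendsto' hYω fun t => (hω t).2.1, hYω⟩
end

section
/- Let γ_t ∈ (0,1) with Σ_t γ_t = ∞, and let Y_{t+1} = (1−γ_t)Y_t + γ_t G_t, where {G_t} is a positive nondecreasing real sequence. Then limsup_{t→∞} |Y_t / G_t| ≤ 1. -/
/-! The excess `D t = max (|Y t| - G t) 0` of `|Y t|` over `G t` contracts like
`D (t + 1) ≤ (1 - γ t) * D t`, because `Y (t + 1)` is a convex combination of `Y t` and `G t`
and `G` does not decrease. Since `1 - γ ≤ exp (-γ)`, the excess is `O(exp (-∑ γ))`, hence tends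
to `0`, and `|Y t / G t| ≤ 1 + D t / G t₀` for `t ≥ t₀`. -/

open Filter Topology Finset

theorem tendsto_zero_of_succ_le_one_sub_mul {D γ : ℕ → ℝ} {t₀ : ℕ} (hD : ∀ t, 0 ≤ D t)
    (hγsum : Tendsto (fun n => ∑ t ∈ range n, γ t) atTop atTop)
    (hstep : ∀ t ≥ t₀, D (t + 1) ≤ (1 - γ t) * D t) :
    Tendsto D atTop (𝓝 0) := by
  set S : ℕ → ℝ := fun n => ∑ t ∈ range n, γ t
  -- `D t * exp (S t)` does not increase from `t₀` on, since `(1 - γ) * exp γ ≤ 1`.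
  have hanti : AntitoneOn (fun t => D t * Real.exp (S t)) (Set.Ici t₀) := by
    refine antitoneOn_nat_Ici_of_succ_le fun t ht => ?_
    have hexp : 1 - γ t ≤ Real.exp (-γ t) := by linarith [Real.add_one_le_exp (-γ t)]
    calc D (t + 1) * Real.exp (S (t + 1))
        ≤ Real.exp (-γ t) * D t * Real.exp (S (t + 1)) := by
          gcongr
          exact (hstep t ht).trans (mul_le_mul_of_nonneg_right hexp (hD t))
      _ = D t * Real.exp (S t) := by
          simp only [S, sum_range_succ, Real.exp_add, Real.exp_neg]
          field_simp
  have hbound : ∀ t ≥ t₀, D t ≤ D t₀ * Real.exp (S t₀) * Real.exp (-S t) := by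
    intro t ht
    rw [Real.exp_neg, ← div_eq_mul_inv, le_div_iff₀ (Real.exp_pos _)]
    exact hanti (Set.mem_Ici.2 le_rfl) (Set.mem_Ici.2 ht) ht
  have hlim : Tendsto (fun t => D t₀ * Real.exp (S t₀) * Real.exp (-S t)) atTop (𝓝 0) := by
    simpa using (Real.tendsto_exp_neg_atTop_nhds_zero.comp hγsum).const_mul (D t₀ * Real.exp (S t₀))
  exact squeeze_zero' (Eventually.of_forall hD) (eventually_atTop.2 ⟨t₀, hbound⟩) hlim

theorem max_abs_convex_comb_sub_le {γ y g g' : ℝ} (hγ₀ : 0 ≤ γ) (hγ₁ : γ ≤ 1) (hg : 0 ≤ g)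
    (hgg' : g ≤ g') :
    max (|(1 - γ) * y + γ * g| - g') 0 ≤ (1 - γ) * max (|y| - g) 0 := by
  have hcomb : |(1 - γ) * y + γ * g| ≤ (1 - γ) * |y| + γ * g := by
    calc |(1 - γ) * y + γ * g| ≤ |(1 - γ) * y| + |γ * g| := abs_add_le _ _
      _ = (1 - γ) * |y| + γ * g := by
        rw [abs_mul, abs_mul, abs_of_nonneg (sub_nonneg.2 hγ₁), abs_of_nonneg hγ₀,
          abs_of_nonneg hg]
  refine max_le ?_ (mul_nonneg (sub_nonneg.2 hγ₁) (le_max_right _ _))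
  calc |(1 - γ) * y + γ * g| - g' ≤ (1 - γ) * (|y| - g) := by linarith
    _ ≤ (1 - γ) * max (|y| - g) 0 :=
      mul_le_mul_of_nonneg_left (le_max_left _ _) (sub_nonneg.2 hγ₁)

theorem abs_div_le_one_add_max_abs_sub_div {y g g₀ : ℝ} (hg₀ : 0 < g₀) (hg₀g : g₀ ≤ g) :
    |y / g| ≤ 1 + max (|y| - g) 0 / g₀ := by
  have hg : 0 < g := hg₀.trans_le hg₀g
  have hD : 0 ≤ max (|y| - g) 0 := le_max_right _ _
  calc |y / g| = |y| / g := by rw [abs_div, abs_of_pos hg]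
    _ ≤ (g + max (|y| - g) 0) / g := by gcongr; linarith [le_max_left (|y| - g) 0]
    _ = 1 + max (|y| - g) 0 / g := by rw [add_div, div_self hg.ne']
    _ ≤ 1 + max (|y| - g) 0 / g₀ := by gcongr

theorem limsup_ratio_le_one (t0 : ℕ) (γ : ℕ → ℝ)
    (hγ : ∀ t, γ t ∈ Set.Ioo (0 : ℝ) 1)
    (hγsum : Tendsto (fun N => ∑ t ∈ Finset.range N, γ t) atTop atTop)
    (G Y : ℕ → ℝ)
    (hGpos : ∀ t, 0 < G t) (hGmono : Monotone G)
    (hY : ∀ t ≥ t0, Y (t + 1) = (1 - γ t) * Y t + γ t * G t) :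
    Filter.limsup (fun t => |Y t / G t|) atTop ≤ 1 := by
  set D : ℕ → ℝ := fun t => max (|Y t| - G t) 0
  have hstep : ∀ t ≥ t0, D (t + 1) ≤ (1 - γ t) * D t := fun t ht => by
    simp only [D, hY t ht]
    exact max_abs_convex_comb_sub_le (hγ t).1.le (hγ t).2.le (hGpos t).le (hGmono t.le_succ)
  have hDlim : Tendsto D atTop (𝓝 0) :=
    tendsto_zero_of_succ_le_one_sub_mul (fun t => le_max_right _ _) hγsum hstep
  have hlim : Tendsto (fun t => 1 + D t / G t0) atTop (𝓝 1) := by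
    simpa using (hDlim.div_const (G t0)).const_add 1
  have hle : ∀ᶠ t in atTop, |Y t / G t| ≤ 1 + D t / G t0 :=
    eventually_atTop.2 ⟨t0, fun t ht => abs_div_le_one_add_max_abs_sub_div (hGpos t0) (hGmono ht)⟩
  calc Filter.limsup (fun t => |Y t / G t|) atTop
      ≤ Filter.limsup (fun t => 1 + D t / G t0) atTop :=
        limsup_le_limsup hle (isCoboundedUnder_le_of_le atTop fun t => abs_nonneg _)
          hlim.isBoundedUnder_le
    _ = 1 := hlim.limsup_eq
end
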